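/- arXiv:2412.11225 — 2 statements merged into one kernel-verified Lean document; each statement's English description precedes it below -/
import Mathlib

section
/- Let $G$ be a topological group acting continuously on a space $X$, let $E$ be another $G$-space, and let $f \colon E \to X$ be a $G$-equivariant continuous map. If $X$ is $G$-locally retractile, then $f$ is a locally trivial fibration (fiber bundle). -/
/-!
Over a retractile neighbourhood `U` of `x`, the section `ξ : U → G` moves the fiber over `x`
onto the fiber over any `y ∈ U` by equivariance, so `z ↦ (f z, ξ (f z)⁻¹ • z)` trivializes `f`
over `U`, with inverse `(y, e) ↦ ξ y • e`.
-/

namespace Equivariant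

section Fibers

variable {G X E : Type*} [Group G] [MulAction G X] [MulAction G E]
  {f : E → X} {U : Set X} {x : X} {ξ : U → G}

theorem inv_smul_mem_fiber (heq : ∀ (g : G) (e : E), f (g • e) = g • f e)
    (hξ : ∀ y : U, ξ y • x = y) (z : f ⁻¹' U) :
    (ξ (U.restrictPreimage f z))⁻¹ • (z : E) ∈ f ⁻¹' {x} := by
  rw [Set.mem_preimage, heq, Set.mem_singleton_iff, inv_smul_eq_iff]
  exact (hξ (U.restrictPreimage f z)).symm

theorem apply_smul_of_mem_fiber (heq : ∀ (g : G) (e : E), f (g • e) = g • f e)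
    (hξ : ∀ y : U, ξ y • x = y) (y : U) (e : f ⁻¹' {x}) : f (ξ y • (e : E)) = y := by
  rw [heq, e.2, hξ]

theorem smul_mem_preimage_of_mem_fiber (heq : ∀ (g : G) (e : E), f (g • e) = g • f e)
    (hξ : ∀ y : U, ξ y • x = y) (y : U) (e : f ⁻¹' {x}) : ξ y • (e : E) ∈ f ⁻¹' U := by
  rw [Set.mem_preimage, apply_smul_of_mem_fiber heq hξ]
  exact y.2

end Fibers

variable {G X E : Type*} [Group G] [TopologicalSpace G] [ContinuousInv G]
  [TopologicalSpace X] [MulAction G X] [TopologicalSpace E] [MulAction G E] [ContinuousSMul G E]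
  {f : E → X} {U : Set X} {x : X}

def trivialization (hf : Continuous f) (heq : ∀ (g : G) (e : E), f (g • e) = g • f e)
    (ξ : C(U, G)) (hξ : ∀ y : U, ξ y • x = y) : f ⁻¹' U ≃ₜ U × f ⁻¹' {x} where
  toFun z := (U.restrictPreimage f z, ⟨_, inv_smul_mem_fiber heq hξ z⟩)
  invFun p := ⟨ξ p.1 • (p.2 : E), smul_mem_preimage_of_mem_fiber heq hξ p.1 p.2⟩
  left_inv z := Subtype.ext (smul_inv_smul _ _)
  right_inv p := by
    have hp : U.restrictPreimage f ⟨_, smul_mem_preimage_of_mem_fiber heq hξ p.1 p.2⟩ = p.1 :=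
      Subtype.ext (apply_smul_of_mem_fiber heq hξ p.1 p.2)
    refine Prod.ext hp (Subtype.ext ?_)
    simp only [hp, inv_smul_smul]
  continuous_toFun := by
    have : Continuous (U.restrictPreimage f) := hf.restrictPreimage
    fun_prop
  continuous_invFun := by fun_prop

theorem coe_fst_trivialization (hf : Continuous f) (heq : ∀ (g : G) (e : E), f (g • e) = g • f e)
    (ξ : C(U, G)) (hξ : ∀ y : U, ξ y • x = y) (z : f ⁻¹' U) :
    ((trivialization hf heq ξ hξ z).1 : X) = f z :=
  rfl

end Equivariant

theorem stmt12_general (G X E : Type*) [Group G] [TopologicalSpace G] [IsTopologicalGroup G]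
    [TopologicalSpace X] [MulAction G X]
    [TopologicalSpace E] [MulAction G E] [ContinuousSMul G E]
    (f : E → X) (hf : Continuous f) (heq : ∀ (g : G) (e : E), f (g • e) = g • f e)
    (hret : ∀ x : X, ∃ U : Set X, IsOpen U ∧ x ∈ U ∧
      ∃ ξ : C(U, G), ∀ y : U, ξ y • x = (y : X)) :
    ∀ x : X, ∃ U : Set X, IsOpen U ∧ x ∈ U ∧
      ∃ e : (f ⁻¹' U) ≃ₜ U × (f ⁻¹' {x}), ∀ z : f ⁻¹' U, ((e z).1 : X) = f z := by
  intro x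
  obtain ⟨U, hU, hxU, ξ, hξ⟩ := hret x
  exact ⟨U, hU, hxU, Equivariant.trivialization hf heq ξ hξ,
    Equivariant.coe_fst_trivialization hf heq ξ hξ⟩

/-- A `G`-equivariant continuous map `f : E → X` to a `G`-locally retractile space `X` is a
locally trivial fibration: around every point of `X` there is an open set `U` over which `f`
is trivialized, with fiber `f ⁻¹' {x}`. -/
theorem stmt12 (G X E : Type*) [Group G] [TopologicalSpace G] [IsTopologicalGroup G]
    [TopologicalSpace X] [MulAction G X] [ContinuousSMul G X]
    [TopologicalSpace E] [MulAction G E] [ContinuousSMul G E]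
    (f : E → X) (hf : Continuous f) (heq : ∀ (g : G) (e : E), f (g • e) = g • f e)
    (hret : ∀ x : X, ∃ U : Set X, IsOpen U ∧ x ∈ U ∧
      ∃ ξ : C(U, G), ∀ y : U, ξ y • x = (y : X)) :
    ∀ x : X, ∃ U : Set X, IsOpen U ∧ x ∈ U ∧
      ∃ e : (f ⁻¹' U) ≃ₜ U × (f ⁻¹' {x}), ∀ z : f ⁻¹' U, ((e z).1 : X) = f z :=
  stmt12_general G X E f hf heq hret
end

section
/- Let $G$ be a topological group acting continuously on a locally path-connected $G$-locally retractile space $X$, and let $H \leq G$ be a subgroup containing the path component of the identity $G_0$. Then $X$ is $H$-locally retractile. -/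
/-!
Pick a `G`-retraction `ξ` near `x` and translate it on the right by `(ξ x)⁻¹`, so that it sends
`x` to `1`; this does not change `ξ y • x` because `ξ x` fixes `x`. Shrinking its domain to the
path component of `x`, which is open by local path-connectedness, `ξ` lands in the path component
of `1`, hence in `H`.
-/

open Set

theorem ContinuousMap.mem_pathComponent_of_pathConnectedSpace {V Y : Type*}
    [TopologicalSpace V] [TopologicalSpace Y] [PathConnectedSpace V] (f : C(V, Y)) (v w : V) :
    f w ∈ pathComponent (f v) :=
  (PathConnectedSpace.joined v w).map f.continuous

theorem exists_localRetraction_apply_self_eq_one {G X : Type*} [Group G] [TopologicalSpace G]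
    [ContinuousMul G] [TopologicalSpace X] [MulAction G X] {U : Set X} {x : X} (hx : x ∈ U)
    (ξ : C(U, G)) (hξ : ∀ y : U, ξ y • x = (y : X)) :
    ∃ ξ' : C(U, G), ξ' ⟨x, hx⟩ = 1 ∧ ∀ y : U, ξ' y • x = (y : X) := by
  have hfix : (ξ ⟨x, hx⟩)⁻¹ • x = x := inv_smul_eq_iff.mpr (hξ ⟨x, hx⟩).symm
  refine ⟨⟨fun y ↦ ξ y * (ξ ⟨x, hx⟩)⁻¹, by fun_prop⟩, mul_inv_cancel _, fun y ↦ ?_⟩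
  simp only [ContinuousMap.coe_mk, mul_smul, hfix, hξ]

theorem stmt13_general (G X : Type*) [Group G] [TopologicalSpace G] [IsTopologicalGroup G]
    [TopologicalSpace X] [MulAction G X] [LocallyPathConnectedSpace X]
    (hret : ∀ x : X, ∃ U : Set X, IsOpen U ∧ x ∈ U ∧
      ∃ ξ : C(U, G), ∀ y : U, ξ y • x = (y : X))
    (H : Subgroup G) (hH : pathComponent (1 : G) ⊆ (H : Set G)) :
    ∀ x : X, ∃ U : Set X, IsOpen U ∧ x ∈ U ∧
      ∃ ξ : C(U, H), ∀ y : U, (ξ y : G) • x = (y : X) := by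
  intro x
  obtain ⟨U, hUo, hxU, ξ₀, hξ₀⟩ := hret x
  obtain ⟨ξ, hξx, hξ⟩ := exists_localRetraction_apply_self_eq_one hxU ξ₀ hξ₀
  set V := pathComponentIn U x
  have hVU : V ⊆ U := pathComponentIn_subset
  have hxV : x ∈ V := mem_pathComponentIn_self hxU
  have : PathConnectedSpace V :=
    isPathConnected_iff_pathConnectedSpace.mp (isPathConnected_pathComponentIn hxU)
  let η : C(V, G) := ξ.comp (ContinuousMap.inclusion hVU)
  have hηx : η ⟨x, hxV⟩ = 1 := hξx
  have hηH : ∀ v, η v ∈ H := fun v ↦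
    hH (hηx ▸ η.mem_pathComponent_of_pathConnectedSpace ⟨x, hxV⟩ v)
  exact ⟨V, hUo.pathComponentIn x, hxV, ⟨_, η.continuous.codRestrict hηH⟩,
    fun v ↦ hξ (inclusion hVU v)⟩

/-- If `X` is a locally path-connected `G`-locally retractile space and `H ≤ G` is a subgroup
containing the path component of the identity, then `X` is `H`-locally retractile. -/
theorem stmt13 (G X : Type*) [Group G] [TopologicalSpace G] [IsTopologicalGroup G]
    [TopologicalSpace X] [MulAction G X] [ContinuousSMul G X] [LocallyPathConnectedSpace X]
    (hret : ∀ x : X, ∃ U : Set X, IsOpen U ∧ x ∈ U ∧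
      ∃ ξ : C(U, G), ∀ y : U, ξ y • x = (y : X))
    (H : Subgroup G) (hH : pathComponent (1 : G) ⊆ (H : Set G)) :
    ∀ x : X, ∃ U : Set X, IsOpen U ∧ x ∈ U ∧
      ∃ ξ : C(U, H), ∀ y : U, (ξ y : G) • x = (y : X) :=
  stmt13_general G X hret H hH
end
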